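/- arXiv:1911.10485 — 2 statements merged into one kernel-verified Lean document; each statement's English description precedes it below -/
import Mathlib

section
/- Let M = (S, I) be a k-colorable transversal matroid. Then there exists a k-colorable partition matroid N = (S, J) that is a rank preserving reduction of M, i.e., N ⪯_r M and χ(N) ≤ k. -/
open Set

variable {α : Type*}

/-- The ground set of the matroid `M` can be partitioned into `k` independent sets. -/
def Matroid.IsColorable (M : Matroid α) (k : ℕ) : Prop :=
  ∃ I : Fin k → Set α, (∀ i, M.Indep (I i)) ∧ (⋃ i, I i) = M.E ∧
    Pairwise fun i j => Disjoint (I i) (I j)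

/-- The coloring number of the matroid `M`: the minimum number of independent sets into
which the ground set can be partitioned. -/
noncomputable def Matroid.chi (M : Matroid α) : ℕ := sInf {k | M.IsColorable k}

/-- The (extended, cardinality-valued) rank of the matroid `M`. -/
noncomputable def Matroid.rkE (M : Matroid α) : ℕ∞ := ⨆ I ∈ {I | M.Indep I}, I.encard

/-- `N` is the partition matroid determined by the partition `P` of its ground set:
a set is independent iff it meets every class of `P` in at most one element. -/
def Matroid.IsPartitionMatroid (N : Matroid α) (P : Set (Set α)) : Prop :=
  ⋃₀ P = N.E ∧ (∀ c ∈ P, ∀ c' ∈ P, c ≠ c' → Disjoint c c') ∧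
    ∀ X, N.Indep X ↔ X ⊆ N.E ∧ ∀ c ∈ P, (X ∩ c).encard ≤ 1

/-- `N` is a reduction of `M` (written `N ⪯ M`): every `N`-independent set is
`M`-independent. -/
def Matroid.Reduction (N M : Matroid α) : Prop :=
  N.E = M.E ∧ ∀ I, N.Indep I → M.Indep I

/-- `M` is a paving matroid of rank `r`: it has rank `r` and every subset of the ground
set of size at most `r - 1` is independent. -/
def Matroid.IsPavingOfRank (M : Matroid α) (r : ℕ) : Prop :=
  M.rkE = (r : ℕ∞) ∧ ∀ X ⊆ M.E, X.encard ≤ ((r - 1 : ℕ) : ℕ∞) → M.Indep X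

/-- A cut (cocircuit) of the matroid `M`: an inclusionwise minimal subset of the ground
set intersecting every basis. -/
def Matroid.IsCut (M : Matroid α) (X : Set α) : Prop :=
  X ⊆ M.E ∧ (∀ B, M.IsBase B → (X ∩ B).Nonempty) ∧
    ∀ Y, Y ⊂ X → ∃ B, M.IsBase B ∧ Y ∩ B = ∅

/-!
Let `C` be a partition of `S` into `k` matchable classes. Gluing the matchings of the classes
gives a map `g : α → β` sending every `s ∈ S` to a neighbour, injectively on each class. The
fibres of `g` on `S` meet each class at most once, so they have at most `k` elements, and the
partition matroid `N` with these fibres as classes is a reduction of `M`, because a set on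
which `g` is injective is matched by `g`; its rank is `|g(S)|`. Now fix a base `B` of `M`
with a matching `h`, and take `g` disagreeing with `h` on as few elements of `B` as possible.
Then `h(B) ⊆ g(S)`: redirecting `g` at some `b ∈ B` with `h b ∉ g(S)` to `h b` keeps it
injective on each class and removes a disagreement. Hence `r(M) = |B| ≤ |g(S)| = r(N)`.
-/

def fiberPartition {β : Type*} (S : Set α) (g : α → β) : Set (Set α) :=
  (fun s => S ∩ g ⁻¹' {g s}) '' S

namespace Matroid

theorem rkE_eq_eRank (M : Matroid α) : M.rkE = M.eRank := by
  refine le_antisymm (iSup₂_le fun _ hI => hI.encard_le_eRank) ?_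
  obtain ⟨B, hB⟩ := M.exists_isBase
  rw [← hB.encard_eq_eRank]
  exact le_iSup₂ (f := fun I (_ : I ∈ {I | M.Indep I}) => I.encard) B hB.indep

theorem Reduction.eRank_le {N M : Matroid α} (h : N.Reduction M) : N.eRank ≤ M.eRank := by
  obtain ⟨B, hB⟩ := N.exists_isBase
  rw [← hB.encard_eq_eRank]
  exact (h.2 B hB.indep).encard_le_eRank

section Partition

variable {β : Type*}

theorem isPartitionMatroid_comapOn_freeOn (S : Set α) (g : α → β) :
    ((freeOn univ).comapOn S g).IsPartitionMatroid (fiberPartition S g) := by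
  refine ⟨?_, ?_, fun X => ?_⟩
  · refine subset_antisymm ?_ fun s hs => ⟨_, ⟨s, hs, rfl⟩, hs, rfl⟩
    rintro _ ⟨_, ⟨s, -, rfl⟩, hx⟩
    exact hx.1
  · rintro _ ⟨s, -, rfl⟩ _ ⟨s', -, rfl⟩ hne
    refine disjoint_left.mpr fun x hx hx' => hne ?_
    exact congrArg (fun t => S ∩ g ⁻¹' {t}) (hx.2.symm.trans hx'.2)
  · simp only [comapOn_indep_iff, freeOn_indep_iff, subset_univ, true_and, comapOn_ground_eq]
    rw [and_comm]
    refine and_congr_right fun hXS => ⟨?_, fun h x hx y hy hxy => ?_⟩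
    · rintro hinj _ ⟨s, -, rfl⟩
      exact encard_le_one_iff.mpr fun x y hx hy => hinj hx.1 hy.1 (hx.2.2.trans hy.2.2.symm)
    · exact encard_le_one_iff.mp (h _ ⟨x, hXS hx, rfl⟩) x y ⟨hx, hXS hx, rfl⟩
        ⟨hy, hXS hy, hxy.symm⟩

theorem eRank_comapOn_freeOn (S : Set α) (g : α → β) :
    ((freeOn univ).comapOn S g).eRank = (g '' S).encard := by
  refine le_antisymm ?_ ?_
  · obtain ⟨B, hB⟩ := ((freeOn univ).comapOn S g).exists_isBase
    obtain ⟨-, hinj, hBS⟩ := comapOn_indep_iff.mp hB.indep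
    rw [← hB.encard_eq_eRank, ← hinj.encard_image]
    exact encard_le_encard (image_mono hBS)
  · obtain ⟨W, hWS, hW⟩ := exists_subset_bijOn S g
    rw [← hW.image_eq, hW.injOn.encard_image]
    exact (comapOn_indep_iff.mpr ⟨by simp, hW.injOn, hWS⟩).encard_le_eRank

theorem Reduction.comapOn_freeOn {M : Matroid α} {S : Set α} {g : α → β} (hE : M.E = S)
    (hInd : ∀ X ⊆ S, InjOn g X → M.Indep X) : ((freeOn univ).comapOn S g).Reduction M := by
  refine ⟨hE.symm, fun X hX => ?_⟩
  obtain ⟨-, hinj, hXS⟩ := comapOn_indep_iff.mp hX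
  exact hInd X hXS hinj

end Partition

end Matroid

section ClasswiseMatching

variable {β ι : Type*}

def IsClasswiseMatching (R : α → β → Prop) (S : Set α) (C : ι → Set α) (g : α → β) : Prop :=
  (∀ s ∈ S, R s (g s)) ∧ ∀ i, InjOn g (C i)

variable {R : α → β → Prop} {S : Set α} {C : ι → Set α} {g : α → β}

theorem exists_forall_eqOn_of_pairwise_disjoint [Nonempty (α → β)]
    (hC : Pairwise fun i j => Disjoint (C i) (C j)) (f : ι → α → β) :
    ∃ g : α → β, ∀ i, EqOn g (f i) (C i) := by
  classical
  refine ⟨fun a => if h : ∃ i, a ∈ C i then f h.choose a else Classical.arbitrary (α → β) a,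
    fun i a ha => ?_⟩
  have h : ∃ j, a ∈ C j := ⟨i, ha⟩
  have hi : h.choose = i := hC.eq (not_disjoint_iff.mpr ⟨a, h.choose_spec, ha⟩)
  simp only [dif_pos h, hi]

theorem exists_isClasswiseMatching [Nonempty (α → β)] (hSC : S ⊆ ⋃ i, C i)
    (hC : Pairwise fun i j => Disjoint (C i) (C j))
    (hmatch : ∀ i, ∃ f : α → β, InjOn f (C i) ∧ ∀ x ∈ C i, R x (f x)) :
    ∃ g, IsClasswiseMatching R S C g := by
  choose f hinj hR using hmatch
  obtain ⟨g, hg⟩ := exists_forall_eqOn_of_pairwise_disjoint hC f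
  refine ⟨g, fun s hs => ?_, fun i => (hinj i).congr (hg i).symm⟩
  obtain ⟨i, hi⟩ := mem_iUnion.mp (hSC hs)
  rw [hg i hi]
  exact hR i s hi

theorem IsClasswiseMatching.update [DecidableEq α] (hg : IsClasswiseMatching R S C g)
    (hCS : ∀ i, C i ⊆ S) {b : α} {t : β} (hbt : R b t) (ht : t ∉ g '' S) :
    IsClasswiseMatching R S C (Function.update g b t) := by
  refine ⟨fun s hs => ?_, fun i => ?_⟩
  · rcases eq_or_ne s b with rfl | hsb
    · rwa [Function.update_self]
    · rw [Function.update_of_ne hsb]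
      exact hg.1 s hs
  · have heq : EqOn (Function.update g b t) g (C i \ {b}) :=
      fun x hx => Function.update_of_ne hx.2 _ _
    refine ((injOn_insert fun h => h.2 rfl).mpr ⟨?_, ?_⟩).mono
      (subset_insert_sdiff_singleton b (C i))
    · exact ((hg.2 i).mono sdiff_subset).congr heq.symm
    · rw [heq.image_eq, Function.update_self]
      exact fun h => ht (image_mono (sdiff_subset.trans (hCS i)) h)

theorem exists_isClasswiseMatching_image_subset [Finite α] (hCS : ∀ i, C i ⊆ S)
    (hg : IsClasswiseMatching R S C g) {B : Set α} (hBS : B ⊆ S) {h : α → β}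
    (hh : ∀ b ∈ B, R b (h b)) :
    ∃ g, IsClasswiseMatching R S C g ∧ h '' B ⊆ g '' S := by
  classical
  obtain ⟨g, hg, hmin⟩ := (measure fun g : α → β => {b ∈ B | g b ≠ h b}.ncard).wf.has_min
    {g | IsClasswiseMatching R S C g} ⟨g, hg⟩
  refine ⟨g, hg, ?_⟩
  rintro _ ⟨b, hb, rfl⟩
  by_contra hbS
  have hgb : g b ≠ h b := fun he => hbS ⟨b, hBS hb, he⟩
  refine hmin _ (hg.update hCS (hh b hb) hbS) (ncard_lt_ncard ?_)
  refine (ssubset_iff_of_subset ?_).mpr ⟨b, ⟨hb, hgb⟩, by simp⟩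
  rintro x ⟨hxB, hx⟩
  rcases eq_or_ne x b with rfl | hxb
  · simp at hx
  · exact ⟨hxB, by rwa [Function.update_of_ne hxb] at hx⟩

theorem encard_inter_preimage_singleton_le [Fintype ι] (hSC : S ⊆ ⋃ i, C i)
    (hg : ∀ i, InjOn g (C i)) (t : β) : (S ∩ g ⁻¹' {t}).encard ≤ Fintype.card ι :=
  calc (S ∩ g ⁻¹' {t}).encard
      ≤ (⋃ i, C i ∩ g ⁻¹' {t}).encard := by
        rw [← iUnion_inter]
        exact encard_le_encard (inter_subset_inter_left _ hSC)
    _ ≤ ∑ i, (C i ∩ g ⁻¹' {t}).encard := encard_iUnion_le_of_fintype _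
    _ ≤ ∑ _i : ι, 1 := Finset.sum_le_sum fun i _ =>
        encard_le_one_iff.mpr fun x y hx hy => hg i hx.1 hy.1 (hx.2.trans hy.2.symm)
    _ = Fintype.card ι := by simp

end ClasswiseMatching

theorem statement_1_general {α β : Type*} [Finite α] (R : α → β → Prop) (S : Set α)
    (M : Matroid α) (hE : M.E = S)
    (hInd : ∀ X, M.Indep X ↔ X ⊆ S ∧ ∃ f : α → β, Set.InjOn f X ∧ ∀ x ∈ X, R x (f x))
    (k : ℕ) (hcol : M.IsColorable k) :
    ∃ (N : Matroid α) (P : Set (Set α)), N.IsPartitionMatroid P ∧ N.Reduction M ∧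
      N.rkE = M.rkE ∧ ∀ c ∈ P, c.encard ≤ (k : ℕ∞) := by
  obtain ⟨C, hCind, hCS, hCdisj⟩ := hcol
  rw [hE] at hCS
  obtain ⟨-, f₀, -⟩ := (hInd ∅).mp M.empty_indep
  have : Nonempty (α → β) := ⟨f₀⟩
  obtain ⟨g₀, hg₀⟩ := exists_isClasswiseMatching hCS.superset hCdisj
    fun i => ((hInd _).mp (hCind i)).2
  obtain ⟨B, hB⟩ := M.exists_isBase
  obtain ⟨hBS, h, hhinj, hhR⟩ := (hInd B).mp hB.indep
  obtain ⟨g, hg, hhg⟩ := exists_isClasswiseMatching_image_subset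
    (fun i => hCS ▸ subset_iUnion C i) hg₀ hBS hhR
  have hred := Matroid.Reduction.comapOn_freeOn hE fun X hXS hinj =>
    (hInd X).mpr ⟨hXS, g, hinj, fun x hx => hg.1 x (hXS hx)⟩
  refine ⟨_, fiberPartition S g, Matroid.isPartitionMatroid_comapOn_freeOn S g, hred, ?_, ?_⟩
  · rw [Matroid.rkE_eq_eRank, Matroid.rkE_eq_eRank]
    refine le_antisymm hred.eRank_le ?_
    calc M.eRank = (h '' B).encard := by rw [hhinj.encard_image, hB.encard_eq_eRank]
      _ ≤ (g '' S).encard := encard_le_encard hhg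
      _ = _ := (Matroid.eRank_comapOn_freeOn S g).symm
  · rintro _ ⟨s, -, rfl⟩
    simpa using encard_inter_preimage_singleton_le hCS.superset hg.2 (g s)

/-- A `k`-colorable transversal matroid (given by a bipartite graph with left vertex type
`α`, right vertex type `β` and edge relation `R`; independent = matchable) admits a rank
preserving reduction to a `k`-colorable partition matroid. -/
theorem statement_1 {α β : Type*} [Finite α] [Finite β] (R : α → β → Prop) (S : Set α)
    (M : Matroid α) (hE : M.E = S)
    (hInd : ∀ X, M.Indep X ↔ X ⊆ S ∧ ∃ f : α → β, Set.InjOn f X ∧ ∀ x ∈ X, R x (f x))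
    (k : ℕ) (hcol : M.IsColorable k) :
    ∃ (N : Matroid α) (P : Set (Set α)), N.IsPartitionMatroid P ∧ N.Reduction M ∧
      N.rkE = M.rkE ∧ ∀ c ∈ P, c.encard ≤ (k : ℕ∞) :=
  statement_1_general R S M hE hInd k hcol
end

section
/- Let r ≥ 2 and let M = (S, I) be a k-colorable paving matroid of rank r whose bases are the r-element subsets of S not contained in any member of a family H = {H_1, …, H_q} of proper subsets of S with |H_i| ≥ r for all i and |H_i ∩ H_j| ≤ r−2 for i ≠ j, with |H_1| ≥ … ≥ |H_q|. If H is nonempty and |S|/r ≤ |H_1|/(r−1), then there exists a partition matroid N = (S, J) with N ⪯_r M and χ(N) = χ(M). -/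
open Set

variable {α : Type*}

/-!
Write `χ = χ(M)`. An independent set of `M` has at most `r` elements and at most `r - 1` of them
lie in `H₁` (otherwise `r` of them would form a base inside `H₁`), so an optimal colouring gives
`|S| ≤ rχ` and `|H₁| ≤ (r - 1)χ`; together with `(r - 1)|S| ≤ r|H₁|` the first bound yields
`|S \ H₁| ≤ χ`. Hence `H₁` splits into `r - 1` nonempty blocks of size at most `χ`, and adding
`S \ H₁` as an `r`-th block gives a partition matroid `N` of rank `r` and colouring number at
most `χ`. An `N`-independent set with `r` elements meets `H₁` in at most `r - 1` elements and
any other member `H` of `𝓗` in at most `|H ∩ H₁| + 1 ≤ r - 1` elements, so it is a base of `M`;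
smaller ones are `M`-independent because `M` is paving. So `N ⪯_r M`, and `χ(M) ≤ χ(N)` holds
for every reduction.
-/

lemma Nat.sub_le_of_pred_mul_le {r a b c : ℕ} (hr : 0 < r) (hba : b ≤ a)
    (h : (r - 1) * a ≤ r * b) (ha : a ≤ r * c) : a - b ≤ c := by
  refine Nat.le_of_mul_le_mul_left ?_ hr
  obtain ⟨s, rfl⟩ : ∃ s, r = s + 1 := ⟨r - 1, by omega⟩
  simp only [Nat.add_sub_cancel, Nat.mul_sub, add_mul, one_mul] at h ha ⊢
  omega

open Finset in
lemma Finpartition.IsEquipartition.card_part_le_of_card_le_mul [DecidableEq α] {s t : Finset α}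
    {P : Finpartition s} {c : ℕ} (hP : P.IsEquipartition) (hs : #s ≤ #P.parts * c)
    (ht : t ∈ P.parts) : #t ≤ c := by
  have hk : 0 < #P.parts := card_pos.2 ⟨t, ht⟩
  rcases hP.card_parts_eq_average ht with h | h
  · exact h ▸ Nat.div_le_of_le_mul hs
  · -- `t` is one of the `#s % #P.parts` large parts, so `#P.parts` does not divide `#s`
    have hmod : #s % #P.parts ≠ 0 := by
      rw [← hP.card_large_parts_eq_mod]
      exact (card_pos.2 ⟨t, mem_filter.2 ⟨ht, h⟩⟩).ne'
    have hlt : #s < c * #P.parts := (hs.trans_eq (mul_comm _ _)).lt_of_ne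
      fun h' ↦ hmod (by rw [h', Nat.mul_mod_left])
    have := (Nat.div_lt_iff_lt_mul hk).2 hlt
    omega

lemma Set.Finite.exists_partition_encard_le {A : Set α} (hA : A.Finite) {n c : ℕ} (hn : n ≠ 0)
    (hnA : n ≤ A.ncard) (hAc : A.ncard ≤ n * c) :
    ∃ Q : Set (Set α), Q.PairwiseDisjoint id ∧ ⋃₀ Q = A ∧ ∅ ∉ Q ∧ Q.encard = n ∧
      ∀ q ∈ Q, q.encard ≤ c := by
  classical
  rw [ncard_eq_toFinset_card _ hA] at hnA hAc
  obtain ⟨F, hF, hFcard⟩ := Finpartition.exists_equipartition_card_eq hA.toFinset hn hnA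
  refine ⟨(↑) '' (F.parts : Set (Finset α)), ?_, ?_, ?_, ?_, ?_⟩
  · rintro _ ⟨t, ht, rfl⟩ _ ⟨u, hu, rfl⟩ hne
    exact Finset.disjoint_coe.2 (F.disjoint ht hu (ne_of_apply_ne _ hne))
  · ext x
    simp only [sUnion_image, mem_iUnion, Finset.mem_coe, exists_prop]
    exact ⟨fun ⟨t, ht, hxt⟩ ↦ hA.mem_toFinset.1 (F.subset ht hxt),
      fun hx ↦ F.exists_mem (hA.mem_toFinset.2 hx)⟩
  · rintro ⟨t, ht, h⟩
    exact F.ne_empty ht (Finset.coe_eq_empty.1 h)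
  · rw [Finset.coe_injective.encard_image, encard_coe_eq_coe_finsetCard, hFcard]
  · rintro _ ⟨t, ht, rfl⟩
    rw [encard_coe_eq_coe_finsetCard, Nat.cast_le]
    exact hF.card_part_le_of_card_le_mul (hFcard ▸ hAc) ht

lemma Set.Finite.exists_partition_of_ssubset {S H : Set α} (hS : S.Finite) (hHS : H ⊂ S)
    {n c : ℕ} (hn : n ≠ 0) (hnH : n ≤ H.ncard) (hHc : H.ncard ≤ n * c) (hSH : (S \ H).ncard ≤ c) :
    ∃ P : Set (Set α), P.PairwiseDisjoint id ∧ ⋃₀ P = S ∧ ∅ ∉ P ∧ P.encard = (n + 1 : ℕ) ∧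
      (∀ p ∈ P, p.encard ≤ c) ∧ S \ H ∈ P := by
  obtain ⟨Q, hQ, hQH, hQne, hQcard, hQc⟩ :=
    (hS.subset hHS.subset).exists_partition_encard_le hn hnH hHc
  have hQsub : ∀ q ∈ Q, q ⊆ H := fun q hq ↦ hQH ▸ subset_sUnion_of_mem hq
  have hSH_ne : (S \ H).Nonempty := sdiff_nonempty.2 hHS.not_subset
  have hSH_notMem : S \ H ∉ Q := fun h ↦
    hSH_ne.ne_empty (disjoint_sdiff_left.eq_bot_of_le (hQsub _ h))
  refine ⟨insert (S \ H) Q, hQ.insert fun q hq _ ↦ disjoint_sdiff_left.mono_right (hQsub q hq),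
    ?_, ?_, ?_, ?_, mem_insert _ _⟩
  · rw [sUnion_insert, hQH, sdiff_union_of_subset hHS.subset]
  · rintro (h | h)
    · exact hSH_ne.ne_empty h.symm
    · exact hQne h
  · rw [encard_insert_of_notMem hSH_notMem, hQcard]
    push_cast
    ring
  · rintro p (rfl | hp)
    · rw [← hS.sdiff.cast_ncard_eq]
      exact_mod_cast hSH
    · exact hQc p hp

namespace Matroid

variable {M N : Matroid α} {P : Set (Set α)} {k : ℕ}

lemma IsColorable.chi_le (h : M.IsColorable k) : M.chi ≤ k := Nat.sInf_le h

lemma IsColorable.isColorable_chi (h : M.IsColorable k) : M.IsColorable M.chi :=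
  Nat.sInf_mem (s := {k | M.IsColorable k}) ⟨k, h⟩

lemma IsColorable.encard_le_mul {X : Set α} {m : ℕ} (h : M.IsColorable k) (hX : X ⊆ M.E)
    (hm : ∀ I, M.Indep I → (I ∩ X).encard ≤ m) : X.encard ≤ (m * k : ℕ) := by
  obtain ⟨I, hI, hIE, -⟩ := h
  calc X.encard = (⋃ i, I i ∩ X).encard := by
        rw [← iUnion_inter, hIE, inter_eq_self_of_subset_right hX]
    _ ≤ ∑ i, (I i ∩ X).encard := encard_iUnion_le_of_fintype _
    _ ≤ ∑ _ : Fin k, (m : ℕ∞) := Finset.sum_le_sum fun i _ ↦ hm _ (hI i)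
    _ = (m * k : ℕ) := by simp [mul_comm]

lemma Reduction.isColorable (h : N.Reduction M) (hN : N.IsColorable k) : M.IsColorable k := by
  obtain ⟨I, hI, hIE, hdisj⟩ := hN
  exact ⟨I, fun i ↦ h.2 _ (hI i), hIE.trans h.1, hdisj⟩

lemma Reduction.chi_eq (h : N.Reduction M) (hN : N.IsColorable M.chi) : N.chi = M.chi :=
  hN.chi_le.antisymm (h.isColorable hN.isColorable_chi).chi_le

lemma Indep.encard_le_rkE {I : Set α} (hI : M.Indep I) : I.encard ≤ M.rkE :=
  le_biSup (fun I ↦ I.encard) (show I ∈ {I | M.Indep I} from hI)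

lemma Indep.isBase_of_rkE_le {I : Set α} (hI : M.Indep I) (hfin : I.Finite)
    (h : M.rkE ≤ I.encard) : M.IsBase I := by
  obtain ⟨B, hB, hIB⟩ := hI.exists_isBase_superset
  rwa [hfin.eq_of_subset_of_encard_le hIB (hB.indep.encard_le_rkE.trans h)]

lemma Indep.encard_inter_le_sub_one {I H : Set α} {r : ℕ} (hI : M.Indep I) (hrk : M.rkE = r)
    (hH : ∀ B, M.IsBase B → ¬B ⊆ H) : (I ∩ H).encard ≤ (r - 1 : ℕ) := by
  by_contra! hlt
  have hle : (r : ℕ∞) ≤ (I ∩ H).encard :=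
    calc (r : ℕ∞) ≤ ((r - 1 : ℕ) : ℕ∞) + 1 := by norm_cast; omega
      _ ≤ (I ∩ H).encard := Order.add_one_le_of_lt hlt
  have hIH : M.Indep (I ∩ H) := hI.subset inter_subset_left
  have hfin : (I ∩ H).Finite := finite_of_encard_le_coe (hrk ▸ hIH.encard_le_rkE)
  exact hH _ (hIH.isBase_of_rkE_le hfin (hrk ▸ hle)) inter_subset_right

def unifOn (E : Set α) (k : ℕ) : Matroid α :=
  (IndepMatroid.ofBddAugment E (fun I ↦ I ⊆ E ∧ I.encard ≤ k)
    ⟨empty_subset E, by simp⟩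
    (fun _ _ hJ hIJ ↦ ⟨hIJ.trans hJ.1, (encard_mono hIJ).trans hJ.2⟩)
    (fun I J hI hJ hlt ↦ by
      obtain ⟨e, heJ, heI⟩ : (J \ I).Nonempty :=
        sdiff_nonempty.2 fun hJI ↦ (encard_mono hJI).not_gt hlt
      refine ⟨e, heJ, heI, insert_subset (hJ.1 heJ) hI.1, ?_⟩
      rw [encard_insert_of_notMem heI]
      exact (Order.add_one_le_of_lt hlt).trans hJ.2)
    ⟨k, fun _ hI ↦ hI.2⟩
    (fun _ hI ↦ hI.1)).matroid

@[simp] lemma unifOn_indep_iff {E I : Set α} : (unifOn E k).Indep I ↔ I ⊆ E ∧ I.encard ≤ k :=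
  Iff.rfl

@[simp] lemma unifOn_ground_eq {E : Set α} : (unifOn E k).E = E := rfl

def partitionOn (P : Set (Set α)) (hP : P.PairwiseDisjoint id) : Matroid α :=
  Matroid.disjointSigma (fun c : P ↦ unifOn (c : Set α) 1)
    (by simp only [unifOn_ground_eq]; exact hP.subtype _ _)

lemma partitionOn_isPartitionMatroid (hP : P.PairwiseDisjoint id) :
    (partitionOn P hP).IsPartitionMatroid P := by
  refine ⟨?_, fun c hc d hd ↦ hP hc hd, fun X ↦ ?_⟩
  · rw [partitionOn, disjointSigma_ground_eq]
    simp [sUnion_eq_iUnion]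
  · simp [partitionOn, and_comm]

namespace IsPartitionMatroid

lemma eq_of_mem (hN : N.IsPartitionMatroid P) {c d : Set α} {x : α} (hc : c ∈ P) (hd : d ∈ P)
    (hxc : x ∈ c) (hxd : x ∈ d) : c = d := by
  by_contra hne
  exact Set.disjoint_left.1 (hN.2.1 c hc d hd hne) hxc hxd

lemma encard_le_of_subset_sUnion (hN : N.IsPartitionMatroid P) {X : Set α} {Q : Set (Set α)}
    (hX : N.Indep X) (hQP : Q ⊆ P) (hXQ : X ⊆ ⋃₀ Q) : X.encard ≤ Q.encard := by
  have hcls : ∀ x ∈ X, ∃ q ∈ Q, x ∈ q := fun x hx ↦ mem_sUnion.1 (hXQ hx)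
  choose! f hfQ hxf using hcls
  refine encard_le_encard_of_injOn hfQ fun x hx y hy hxy ↦ ?_
  exact encard_le_one_iff.1 (((hN.2.2 X).1 hX).2 _ (hQP (hfQ x hx))) x y ⟨hx, hxf x hx⟩
    ⟨hy, hxy ▸ hxf y hy⟩

lemma encard_diff_add_one_le (hN : N.IsPartitionMatroid P) {X c : Set α} (hX : N.Indep X)
    (hc : c ∈ P) : (X \ c).encard + 1 ≤ P.encard := by
  rw [← encard_sdiff_singleton_add_one hc]
  gcongr
  refine hN.encard_le_of_subset_sUnion (hX.subset sdiff_subset) sdiff_subset fun x hx ↦ ?_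
  obtain ⟨d, hd, hxd⟩ := mem_sUnion.1 (hN.1 ▸ hX.subset_ground hx.1)
  exact ⟨d, ⟨hd, fun hdc ↦ hx.2 (hdc ▸ hxd)⟩, hxd⟩

lemma rkE_eq (hN : N.IsPartitionMatroid P) (hP : ∅ ∉ P) : N.rkE = P.encard := by
  refine le_antisymm (iSup₂_le fun X hX ↦ hN.encard_le_of_subset_sUnion hX subset_rfl
    (hN.1 ▸ Indep.subset_ground hX)) ?_
  have hne : ∀ c : P, (c : Set α).Nonempty :=
    fun c ↦ nonempty_iff_ne_empty.2 fun h ↦ hP (h ▸ c.2)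
  choose g hg using hne
  have hinj : Function.Injective g := fun c d hcd ↦
    Subtype.ext (hN.eq_of_mem c.2 d.2 (hg c) (hcd ▸ hg d))
  have hT : N.Indep (range g) := by
    refine (hN.2.2 _).2 ⟨?_, fun c hc ↦ encard_le_one_iff.2 ?_⟩
    · rintro _ ⟨d, rfl⟩
      exact hN.1 ▸ mem_sUnion_of_mem (hg d) d.2
    · rintro _ _ ⟨⟨d, rfl⟩, hdc⟩ ⟨⟨e, rfl⟩, hec⟩
      exact congrArg g (Subtype.ext ((hN.eq_of_mem d.2 hc (hg d) hdc).trans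
        (hN.eq_of_mem e.2 hc (hg e) hec).symm))
  calc P.encard = ENat.card P := rfl
    _ ≤ (range g).encard := hinj.encard_range
    _ ≤ N.rkE := hT.encard_le_rkE

lemma isColorable (hN : N.IsPartitionMatroid P) (hP : ∀ c ∈ P, c.encard ≤ k) :
    N.IsColorable k := by
  have hemb : ∀ c ∈ P, ∃ f : c → Fin k, f.Injective := fun c hc ↦ by
    obtain ⟨hfin, hle⟩ := encard_le_coe_iff_finite_ncard_le.1 (hP c hc)
    have := hfin.fintype
    obtain ⟨f⟩ := Function.Embedding.nonempty_of_card_le (α := c) (β := Fin k)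
      (by rwa [Fintype.card_fin, ← Nat.card_eq_fintype_card, Nat.card_coe_set_eq])
    exact ⟨f, f.injective⟩
  choose e he using hemb
  refine ⟨fun j ↦ {x | ∃ c, ∃ (hc : c ∈ P) (hx : x ∈ c), e c hc ⟨x, hx⟩ = j}, fun j ↦ ?_, ?_, ?_⟩
  · refine (hN.2.2 _).2 ⟨?_, fun d hd ↦ encard_le_one_iff.2 ?_⟩
    · rintro x ⟨c, hc, hxc, -⟩
      exact hN.1 ▸ mem_sUnion_of_mem hxc hc
    · rintro x y ⟨⟨c, hc, hxc, hx⟩, hxd⟩ ⟨⟨c', hc', hyc', hy⟩, hyd⟩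
      obtain rfl := hN.eq_of_mem hc hd hxc hxd
      obtain rfl := hN.eq_of_mem hc' hc hyc' hyd
      exact congrArg Subtype.val (he _ _ (hx.trans hy.symm))
  · ext x
    simp only [mem_iUnion, mem_ofPred_eq, ← hN.1, mem_sUnion]
    exact ⟨fun ⟨_, c, hc, hxc, _⟩ ↦ ⟨c, hc, hxc⟩, fun ⟨c, hc, hxc⟩ ↦ ⟨_, c, hc, hxc, rfl⟩⟩
  · intro j j' hjj'
    refine Set.disjoint_left.2 fun x ⟨c, hc, hxc, hx⟩ ⟨c', hc', hxc', hx'⟩ ↦ hjj' ?_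
    obtain rfl := hN.eq_of_mem hc hc' hxc hxc'
    exact hx.symm.trans hx'

lemma reduction_of_sdiff_mem {S H₁ : Set α} {𝓗 : Set (Set α)} {r : ℕ}
    (hN : N.IsPartitionMatroid P) (hr : 2 ≤ r) (hE : M.E = S) (hpav : M.IsPavingOfRank r)
    (hBase : ∀ B, M.IsBase B ↔ B ⊆ S ∧ B.encard = (r : ℕ∞) ∧ ∀ H ∈ 𝓗, ¬B ⊆ H) (hH₁ : H₁ ∈ 𝓗)
    (h𝓗' : ∀ H ∈ 𝓗, H ≠ H₁ → (H ∩ H₁).encard ≤ ((r - 2 : ℕ) : ℕ∞))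
    (hNE : N.E = S) (hSH₁ : S \ H₁ ∈ P) (hP : P.encard = r) : N.Reduction M := by
  refine ⟨hNE.trans hE.symm, fun X hX ↦ ?_⟩
  have hXS : X ⊆ S := hNE ▸ hX.subset_ground
  have hin : (X ∩ H₁).encard + 1 ≤ r := by
    have hXH₁ : X ∩ H₁ = X \ (S \ H₁) := by
      rw [sdiff_sdiff_right, sdiff_eq_empty.2 hXS, empty_union]
    rw [hXH₁, ← hP]
    exact hN.encard_diff_add_one_le hX hSH₁
  have hout : (X \ H₁).encard ≤ 1 :=
    (encard_mono (show X \ H₁ ⊆ X ∩ (S \ H₁) from fun x hx ↦ ⟨hx.1, hXS hx.1, hx.2⟩)).trans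
      (((hN.2.2 X).1 hX).2 _ hSH₁)
  have hsplit : X.encard = (X ∩ H₁).encard + (X \ H₁).encard := by
    rw [add_comm, encard_sdiff_add_encard_inter]
  by_cases hsmall : X.encard ≤ ((r - 1 : ℕ) : ℕ∞)
  · exact hpav.2 X (hE ▸ hXS) hsmall
  have hXr : X.encard = r := by
    refine le_antisymm (hsplit ▸ (add_le_add le_rfl hout).trans hin) ?_
    calc (r : ℕ∞) ≤ ((r - 1 : ℕ) : ℕ∞) + 1 := by norm_cast; omega
      _ ≤ X.encard := Order.add_one_le_of_lt (not_le.1 hsmall)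
  refine ((hBase X).2 ⟨hXS, hXr, fun H hH hXH ↦ ?_⟩).indep
  obtain rfl | hne := eq_or_ne H H₁
  · rw [inter_eq_self_of_subset_left hXH, hXr, ENat.add_one_le_iff (ENat.natCast_ne_top r)] at hin
    exact hin.false
  · have hinter := (encard_mono (inter_subset_inter_left H₁ hXH)).trans (h𝓗' H hH hne)
    have hle : (r : ℕ∞) ≤ ((r - 2 : ℕ) : ℕ∞) + 1 := hXr ▸ hsplit ▸ add_le_add hinter hout
    norm_cast at hle
    omega

end IsPartitionMatroid

end Matroid

theorem statement_12_general (S : Set α) (hfin : S.Finite) (r k : ℕ) (hr : 2 ≤ r)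
    (𝓗 : Set (Set α))
    (h𝓗 : ∀ H ∈ 𝓗, H ⊂ S ∧ (r : ℕ∞) ≤ H.encard)
    (h𝓗' : ∀ H₁ ∈ 𝓗, ∀ H₂ ∈ 𝓗, H₁ ≠ H₂ → (H₁ ∩ H₂).encard ≤ ((r - 2 : ℕ) : ℕ∞))
    (M : Matroid α) (hE : M.E = S) (hpav : M.IsPavingOfRank r)
    (hBase : ∀ B, M.IsBase B ↔ B ⊆ S ∧ B.encard = (r : ℕ∞) ∧ ∀ H ∈ 𝓗, ¬B ⊆ H)
    (hcol : M.IsColorable k)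
    (H₁ : Set α) (hH₁ : H₁ ∈ 𝓗)
    (hcase : (r - 1) * S.ncard ≤ r * H₁.ncard) :
    ∃ (N : Matroid α) (P : Set (Set α)), N.IsPartitionMatroid P ∧ N.Reduction M ∧
      N.rkE = M.rkE ∧ N.chi = M.chi := by
  obtain ⟨hH₁S, hrH₁⟩ := h𝓗 H₁ hH₁
  have hχ := hcol.isColorable_chi
  have hH₁χ : H₁.ncard ≤ (r - 1) * M.chi := by
    have h := hχ.encard_le_mul (hE ▸ hH₁S.subset) fun I hI ↦
      hI.encard_inter_le_sub_one hpav.1 fun B hB ↦ ((hBase B).1 hB).2.2 H₁ hH₁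
    exact (encard_le_coe_iff_finite_ncard_le.1 h).2
  have hSχ : S.ncard ≤ r * M.chi := by
    have h := hχ.encard_le_mul hE.ge fun I hI ↦
      (encard_mono inter_subset_left).trans (hpav.1 ▸ hI.encard_le_rkE)
    exact (encard_le_coe_iff_finite_ncard_le.1 h).2
  have hSH₁ : (S \ H₁).ncard ≤ M.chi := by
    rw [ncard_sdiff' hH₁S.subset hfin]
    exact Nat.sub_le_of_pred_mul_le (by omega) (ncard_le_ncard hH₁S.subset hfin) hcase hSχ
  have hH₁r : r - 1 ≤ H₁.ncard := by
    rw [← (hfin.subset hH₁S.subset).cast_ncard_eq, Nat.cast_le] at hrH₁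
    omega
  obtain ⟨P, hP, hPS, hPne, hPcard, hPχ, hSH₁P⟩ :=
    hfin.exists_partition_of_ssubset hH₁S (by omega) hH₁r hH₁χ hSH₁
  rw [Nat.sub_add_cancel (by omega)] at hPcard
  have hN := Matroid.partitionOn_isPartitionMatroid hP
  have hred := hN.reduction_of_sdiff_mem hr hE hpav hBase hH₁
    (fun H hH hne ↦ h𝓗' H hH H₁ hH₁ hne) (hN.1.symm.trans hPS) hSH₁P hPcard
  exact ⟨_, P, hN, hred, by rw [hN.rkE_eq hPne, hpav.1, hPcard], hred.chi_eq (hN.isColorable hPχ)⟩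

/-- If a `k`-colorable paving matroid `M` of rank `r ≥ 2` is defined by a nonempty family
`𝓗` with largest member `H₁` satisfying `|S|/r ≤ |H₁|/(r-1)`, then `M` admits a rank
preserving reduction to a partition matroid `N` with `χ(N) = χ(M)`. -/
theorem statement_12 (S : Set α) (hfin : S.Finite) (r k : ℕ) (hr : 2 ≤ r)
    (hSr : (r : ℕ∞) ≤ S.encard) (𝓗 : Set (Set α))
    (h𝓗 : ∀ H ∈ 𝓗, H ⊂ S ∧ (r : ℕ∞) ≤ H.encard)
    (h𝓗' : ∀ H₁ ∈ 𝓗, ∀ H₂ ∈ 𝓗, H₁ ≠ H₂ → (H₁ ∩ H₂).encard ≤ ((r - 2 : ℕ) : ℕ∞))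
    (M : Matroid α) (hE : M.E = S) (hpav : M.IsPavingOfRank r)
    (hBase : ∀ B, M.IsBase B ↔ B ⊆ S ∧ B.encard = (r : ℕ∞) ∧ ∀ H ∈ 𝓗, ¬B ⊆ H)
    (hcol : M.IsColorable k)
    (H₁ : Set α) (hH₁ : H₁ ∈ 𝓗) (hmax : ∀ H ∈ 𝓗, H.ncard ≤ H₁.ncard)
    (hcase : (r - 1) * S.ncard ≤ r * H₁.ncard) :
    ∃ (N : Matroid α) (P : Set (Set α)), N.IsPartitionMatroid P ∧ N.Reduction M ∧
      N.rkE = M.rkE ∧ N.chi = M.chi :=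
  statement_12_general S hfin r k hr 𝓗 h𝓗 h𝓗' M hE hpav hBase hcol H₁ hH₁ hcase
end
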